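/- Let f : ℝ² → ℝ be 2π-periodic in each variable and suppose Σ_{n=1}^∞ √(v_j(n,f)) / n^{3/2} < ∞ for j = 1,2, where v₁, v₂ are the partial moduli of variation of f. Then f ∈ HBV. -/

import Mathlib

/-!
Put `a i j = |f(I_i, J_j)|`. Any `k` entries of one column of `a` sum to at most `2 v₁(k)`, so an
entry dominated by at least `k` entries of its column is at most `2 v₁(k) / k`; rows behave in the
same way with `v₂`. Grading the entries by these two ranks gives `a i j ≤ g(ρ₁) h(ρ₂)` with
antitone `g k ≤ √(2 v₁(k) / k)` and `h l ≤ √(2 v₂(l) / l)`. Summation by parts in both ranks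
reduces `Σ a i j / (i j)` to the weights `Σ 1 / (i j)` of the sets `{ρ₁ ≤ k, ρ₂ ≤ l}`, which have at
most `k` points in each column and `l` in each row and hence weight `O(log k · log l)`; summing back
by parts gives `HV₁,₂(f) ≤ 8 (Σ √v₁(k) / k^{3/2}) (Σ √v₂(l) / l^{3/2})`. The partial variations are
bounded in the same way with a single rank, using `g k ≤ √(g 1 · g k)`.
-/

open scoped ENNReal BigOperators
open Filter Set

noncomputable section

/-- A collection of `n` pairwise nonoverlapping subintervals of `T = [0, 2π]`,
given as pairs of endpoints. -/
def NonoverlapIcc (n : ℕ) (I : Fin n → ℝ × ℝ) : Prop :=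
  (∀ i, 0 ≤ (I i).1 ∧ (I i).1 < (I i).2 ∧ (I i).2 ≤ 2 * Real.pi) ∧
    ∀ i j, i ≠ j → (I i).2 ≤ (I j).1 ∨ (I j).2 ≤ (I i).1

/-- `f : ℝ² → ℝ` (curried) is `2π`-periodic in each variable. -/
def Periodic2 (f : ℝ → ℝ → ℝ) : Prop :=
  ∀ x y : ℝ, f (x + 2 * Real.pi) y = f x y ∧ f x (y + 2 * Real.pi) = f x y

/-- `ΛV₁(f)`: partial `Λ`-variation in the first variable. -/
def LamV1 (Λ : ℕ → ℝ) (f : ℝ → ℝ → ℝ) : ℝ≥0∞ :=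
  ⨆ (y ∈ Icc (0:ℝ) (2 * Real.pi)) (n : ℕ) (I : Fin n → ℝ × ℝ) (_ : NonoverlapIcc n I),
    ENNReal.ofReal (∑ i, |f (I i).2 y - f (I i).1 y| / Λ ((i : ℕ) + 1))

/-- `ΛV₂(f)`: partial `Λ`-variation in the second variable. -/
def LamV2 (Λ : ℕ → ℝ) (f : ℝ → ℝ → ℝ) : ℝ≥0∞ :=
  ⨆ (x ∈ Icc (0:ℝ) (2 * Real.pi)) (m : ℕ) (J : Fin m → ℝ × ℝ) (_ : NonoverlapIcc m J),
    ENNReal.ofReal (∑ j, |f x (J j).2 - f x (J j).1| / Λ ((j : ℕ) + 1))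

/-- `ΛV₁,₂(f)`: mixed `Λ`-variation. -/
def LamV12 (Λ : ℕ → ℝ) (f : ℝ → ℝ → ℝ) : ℝ≥0∞ :=
  ⨆ (n : ℕ) (m : ℕ) (I : Fin n → ℝ × ℝ) (J : Fin m → ℝ × ℝ)
    (_ : NonoverlapIcc n I) (_ : NonoverlapIcc m J),
    ENNReal.ofReal (∑ i, ∑ j,
      |f (I i).1 (J j).1 - f (I i).1 (J j).2 - f (I i).2 (J j).1 + f (I i).2 (J j).2| /
        (Λ ((i : ℕ) + 1) * Λ ((j : ℕ) + 1)))

/-- Total harmonic variation `HV(f) = HV₁(f) + HV₂(f) + HV₁,₂(f)` (with `λ_n = n`).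
`f ∈ HBV` iff `HarmonicV f ≠ ⊤`. -/
def HarmonicV (f : ℝ → ℝ → ℝ) : ℝ≥0∞ :=
  LamV1 (fun n => (n : ℝ)) f + LamV2 (fun n => (n : ℝ)) f + LamV12 (fun n => (n : ℝ)) f

/-- `Λ#V₁(f)`. -/
def LamSharpV1 (Λ : ℕ → ℝ) (f : ℝ → ℝ → ℝ) : ℝ≥0∞ :=
  ⨆ (n : ℕ) (I : Fin n → ℝ × ℝ) (y : Fin n → ℝ)
    (_ : NonoverlapIcc n I) (_ : ∀ i, y i ∈ Icc (0:ℝ) (2 * Real.pi)),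
    ENNReal.ofReal (∑ i, |f (I i).2 (y i) - f (I i).1 (y i)| / Λ ((i : ℕ) + 1))

/-- `Λ#V₂(f)`. -/
def LamSharpV2 (Λ : ℕ → ℝ) (f : ℝ → ℝ → ℝ) : ℝ≥0∞ :=
  ⨆ (m : ℕ) (J : Fin m → ℝ × ℝ) (x : Fin m → ℝ)
    (_ : NonoverlapIcc m J) (_ : ∀ j, x j ∈ Icc (0:ℝ) (2 * Real.pi)),
    ENNReal.ofReal (∑ j, |f (x j) (J j).2 - f (x j) (J j).1| / Λ ((j : ℕ) + 1))

/-- A collection of `n` pairwise nonoverlapping rectangles `[α,β] × [γ,δ] ⊆ T²`,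
encoded as `((α, β), (γ, δ))`. -/
def NonoverlapRect (n : ℕ) (A : Fin n → (ℝ × ℝ) × (ℝ × ℝ)) : Prop :=
  (∀ k, 0 ≤ (A k).1.1 ∧ (A k).1.1 < (A k).1.2 ∧ (A k).1.2 ≤ 2 * Real.pi ∧
        0 ≤ (A k).2.1 ∧ (A k).2.1 < (A k).2.2 ∧ (A k).2.2 ≤ 2 * Real.pi) ∧
    ∀ k l, k ≠ l →
      Disjoint (Ioo (A k).1.1 (A k).1.2 ×ˢ Ioo (A k).2.1 (A k).2.2)
        (Ioo (A l).1.1 (A l).1.2 ×ˢ Ioo (A l).2.1 (A l).2.2)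

/-- `Λ*V(f)` of Dyachenko–Waterman. -/
def LamStarV (Λ : ℕ → ℝ) (f : ℝ → ℝ → ℝ) : ℝ≥0∞ :=
  ⨆ (n : ℕ) (A : Fin n → (ℝ × ℝ) × (ℝ × ℝ)) (_ : NonoverlapRect n A),
    ENNReal.ofReal (∑ k,
      |f (A k).1.1 (A k).2.1 - f (A k).1.1 (A k).2.2 -
        f (A k).1.2 (A k).2.1 + f (A k).1.2 (A k).2.2| / Λ ((k : ℕ) + 1))

/-- Partial `p`-variation (first variable); with `Φ(u) = u^p`. -/
def PV1pow (p : ℝ) (f : ℝ → ℝ → ℝ) : ℝ≥0∞ :=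
  ⨆ (y ∈ Icc (0:ℝ) (2 * Real.pi)) (n : ℕ) (I : Fin n → ℝ × ℝ) (_ : NonoverlapIcc n I),
    ENNReal.ofReal (∑ i, |f (I i).2 y - f (I i).1 y| ^ p)

/-- Partial `p`-variation (second variable). -/
def PV2pow (p : ℝ) (f : ℝ → ℝ → ℝ) : ℝ≥0∞ :=
  ⨆ (x ∈ Icc (0:ℝ) (2 * Real.pi)) (m : ℕ) (J : Fin m → ℝ × ℝ) (_ : NonoverlapIcc m J),
    ENNReal.ofReal (∑ j, |f x (J j).2 - f x (J j).1| ^ p)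

/-- `V#_{Φ,1}(f)` for the class `B#V_Φ`. -/
def PhiSharpV1 (Φ : ℝ → ℝ) (f : ℝ → ℝ → ℝ) : ℝ≥0∞ :=
  ⨆ (n : ℕ) (I : Fin n → ℝ × ℝ) (y : Fin n → ℝ)
    (_ : NonoverlapIcc n I) (_ : ∀ i, y i ∈ Icc (0:ℝ) (2 * Real.pi)),
    ENNReal.ofReal (∑ i, Φ |f (I i).2 (y i) - f (I i).1 (y i)|)

/-- `V#_{Φ,2}(f)` for the class `B#V_Φ`. -/
def PhiSharpV2 (Φ : ℝ → ℝ) (f : ℝ → ℝ → ℝ) : ℝ≥0∞ :=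
  ⨆ (m : ℕ) (J : Fin m → ℝ × ℝ) (x : Fin m → ℝ)
    (_ : NonoverlapIcc m J) (_ : ∀ j, x j ∈ Icc (0:ℝ) (2 * Real.pi)),
    ENNReal.ofReal (∑ j, Φ |f (x j) (J j).2 - f (x j) (J j).1|)

/-- Partial modulus of variation `v₁(n, f)`. -/
def modV1 (f : ℝ → ℝ → ℝ) (n : ℕ) : ℝ≥0∞ :=
  ⨆ (y ∈ Icc (0:ℝ) (2 * Real.pi)) (I : Fin n → ℝ × ℝ) (_ : NonoverlapIcc n I),
    ENNReal.ofReal (∑ i, |f (I i).2 y - f (I i).1 y|)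

/-- Partial modulus of variation `v₂(m, f)`. -/
def modV2 (f : ℝ → ℝ → ℝ) (m : ℕ) : ℝ≥0∞ :=
  ⨆ (x ∈ Icc (0:ℝ) (2 * Real.pi)) (J : Fin m → ℝ × ℝ) (_ : NonoverlapIcc m J),
    ENNReal.ofReal (∑ j, |f x (J j).2 - f x (J j).1|)

/-- `v₁#(n, f)`. -/
def modSharpV1 (f : ℝ → ℝ → ℝ) (n : ℕ) : ℝ≥0∞ :=
  ⨆ (I : Fin n → ℝ × ℝ) (y : Fin n → ℝ)
    (_ : NonoverlapIcc n I) (_ : ∀ i, y i ∈ Icc (0:ℝ) (2 * Real.pi)),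
    ENNReal.ofReal (∑ i, |f (I i).2 (y i) - f (I i).1 (y i)|)

/-- `v₂#(m, f)`. -/
def modSharpV2 (f : ℝ → ℝ → ℝ) (m : ℕ) : ℝ≥0∞ :=
  ⨆ (J : Fin m → ℝ × ℝ) (x : Fin m → ℝ)
    (_ : NonoverlapIcc m J) (_ : ∀ j, x j ∈ Icc (0:ℝ) (2 * Real.pi)),
    ENNReal.ofReal (∑ j, |f (x j) (J j).2 - f (x j) (J j).1|)

/-- The shifted sequence `Λ_n = {λ_k}_{k=n}^∞`: its `i`-th member (`i ≥ 1`) is `λ_{n+i-1}`. -/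
def ShiftSeq (Λ : ℕ → ℝ) (n : ℕ) : ℕ → ℝ := fun k => Λ (k + n - 1)

/-- The sequence `λ_n = n / log n` (for `n ≥ 2`; the value at `n ≤ 1` is irrelevant). -/
def nlogSeq : ℕ → ℝ := fun n => if n ≤ 1 then 1 else (n : ℝ) / Real.log n

/-- Double Fourier coefficient
`f̂(m,n) = (1/(4π²)) ∫₀^{2π}∫₀^{2π} f(x,y) e^{-imx} e^{-iny} dx dy`. -/
def fCoef (f : ℝ → ℝ → ℝ) (m n : ℤ) : ℂ :=
  (4 * (Real.pi : ℂ) ^ 2)⁻¹ *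
    ∫ x in (0:ℝ)..(2 * Real.pi), ∫ y in (0:ℝ)..(2 * Real.pi),
      (f x y : ℂ) * Complex.exp (-(Complex.I * (m : ℂ) * (x : ℂ))) *
        Complex.exp (-(Complex.I * (n : ℂ) * (y : ℂ)))

/-- Rectangular partial sum `S_{M,N}[f,(x,y)]` of the double Fourier series. -/
def SRect (f : ℝ → ℝ → ℝ) (M N : ℕ) (x y : ℝ) : ℂ :=
  ∑ m ∈ Finset.Icc (-(M : ℤ)) (M : ℤ), ∑ n ∈ Finset.Icc (-(N : ℤ)) (N : ℤ),
    fCoef f m n * Complex.exp (Complex.I * (m : ℂ) * (x : ℂ)) *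
      Complex.exp (Complex.I * (n : ℂ) * (y : ℂ))

/-- One-sided punctured neighborhood filter: from the right if `s = true`,
from the left if `s = false`. -/
def sideF (x : ℝ) (s : Bool) : Filter ℝ :=
  if s then nhdsWithin x (Ioi x) else nhdsWithin x (Iio x)

/-- `HasQuadLim f x y s t L` means the open-quadrant limit of `f` at `(x,y)` from the
quadrant with horizontal direction `s` and vertical direction `t` exists and equals `L`
(e.g. `s = true, t = false` is `f(x+0, y-0)`). -/
def HasQuadLim (f : ℝ → ℝ → ℝ) (x y : ℝ) (s t : Bool) (L : ℝ) : Prop :=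
  Tendsto (fun p : ℝ × ℝ => f p.1 p.2) ((sideF x s) ×ˢ (sideF y t)) (nhds L)

/-- Cesàro numbers `A_k^α = (α+1)(α+2)⋯(α+k)/k!`. -/
def AA (α : ℝ) : ℕ → ℝ
  | 0 => 1
  | k + 1 => AA α k * (α + ((k : ℝ) + 1)) / ((k : ℝ) + 1)

/-- Cesàro `(C; α, β)` means of the double Fourier series of `f`. -/
def cesaro (f : ℝ → ℝ → ℝ) (α β : ℝ) (n m : ℕ) (x y : ℝ) : ℂ :=
  ((1 / (AA α n * AA β m) : ℝ) : ℂ) *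
    ∑ i ∈ Finset.range (n + 1), ∑ j ∈ Finset.range (m + 1),
      ((AA (α - 1) (n - i) * AA (β - 1) (m - j) : ℝ) : ℂ) * SRect f i j x y

end

open Finset

theorem le_sqrt_mul_sqrt {x y z : ℝ} (hy : x ≤ y) (hz : x ≤ z) : x ≤ √y * √z := by
  rcases le_total x 0 with hx | hx
  · exact hx.trans (by positivity)
  · calc x = √x * √x := (Real.mul_self_sqrt hx).symm
      _ ≤ √y * √z := by gcongr

theorem abs_sub_sub_add_le (a b c d : ℝ) : |a - b - c + d| ≤ |c - a| + |d - b| :=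
  calc |a - b - c + d| = |(d - b) - (c - a)| := by ring_nf
    _ ≤ |d - b| + |c - a| := abs_sub _ _
    _ = |c - a| + |d - b| := add_comm _ _

theorem rpow_half_div_rpow_three_halves {x c : ℝ} (hx : 0 ≤ x) (hc : 0 < c) :
    x ^ ((1 : ℝ) / 2) / c ^ ((3 : ℝ) / 2) = √(x / c) / c := by
  rw [Real.sqrt_div hx, ← Real.sqrt_eq_rpow, show (3 : ℝ) / 2 = 1 / 2 + 1 by norm_num,
    Real.rpow_add hc, Real.rpow_one, ← Real.sqrt_eq_rpow, div_div]

theorem cast_harmonic_eq_sum (n : ℕ) :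
    (harmonic n : ℝ) = ∑ t ∈ range n, 1 / ((t : ℝ) + 1) := by
  simp [harmonic]

theorem monotone_harmonic : Monotone harmonic :=
  monotone_nat_of_le_succ fun n => by
    rw [harmonic_succ]
    exact le_add_of_nonneg_right (by positivity)

theorem one_le_harmonic {n : ℕ} (hn : n ≠ 0) : 1 ≤ harmonic n :=
  calc 1 = harmonic 1 := by simp
    _ ≤ harmonic n := monotone_harmonic (Nat.one_le_iff_ne_zero.2 hn)

theorem sum_le_sum_range_card_of_antitone {M : Type*} [AddCommMonoid M] [PartialOrder M]
    [IsOrderedAddMonoid M] {u : ℕ → M} (hu : Antitone u) (s : Finset ℕ) :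
    ∑ i ∈ s, u i ≤ ∑ t ∈ range #s, u t := by
  induction s using Finset.induction_on_max with
  | empty => simp
  | insert a s hlt ih =>
    have has : a ∉ s := fun h => (hlt a h).false
    have hcard : #s ≤ a := by
      simpa using Finset.card_le_card fun x hx => Finset.mem_range.2 (hlt x hx)
    rw [sum_insert has, card_insert_of_notMem has, sum_range_succ, add_comm]
    exact add_le_add ih (hu hcard)

theorem sum_inv_le_harmonic_card {β : Type*} (t : Finset β) (e : β → ℕ) (he : Set.InjOn e t) :
    ∑ x ∈ t, 1 / ((e x : ℝ) + 1) ≤ harmonic #t := by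
  rw [← sum_image (f := fun i : ℕ => 1 / ((i : ℝ) + 1)) he, cast_harmonic_eq_sum,
    ← Finset.card_image_of_injOn he]
  exact sum_le_sum_range_card_of_antitone (fun i j hij => by gcongr) _

section UpperCount

variable {α β : Type*} [LinearOrder β]

def upperCount (s : Finset α) (a : α → β) (i : α) : ℕ := #{j ∈ s | a i ≤ a j}

theorem upperCount_le_card (s : Finset α) (a : α → β) (i : α) : upperCount s a i ≤ #s :=
  card_filter_le _ _

theorem card_upperCount_le (s : Finset α) (a : α → β) (k : ℕ) :
    #{i ∈ s | upperCount s a i ≤ k} ≤ k := by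
  set t := {i ∈ s | upperCount s a i ≤ k}
  rcases t.eq_empty_or_nonempty with ht | ht
  · simp [ht]
  obtain ⟨i₀, hi₀, hmin⟩ := t.exists_min_image a ht
  calc #t ≤ upperCount s a i₀ := Finset.card_le_card fun j hj =>
        Finset.mem_filter.2 ⟨(Finset.mem_filter.1 hj).1, hmin j hj⟩
    _ ≤ k := (Finset.mem_filter.1 hi₀).2

theorem mul_le_of_le_upperCount {s : Finset α} {a : α → ℝ} {V : ℕ → ℝ}
    (hV : ∀ t ⊆ s, ∑ j ∈ t, a j ≤ V #t) {i : α} {l : ℕ} (hl : l ≤ upperCount s a i) :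
    l * a i ≤ V l := by
  obtain ⟨t, hts, rfl⟩ := exists_subset_card_eq hl
  calc #t * a i = ∑ _j ∈ t, a i := by simp
    _ ≤ ∑ j ∈ t, a j := sum_le_sum fun j hj => (Finset.mem_filter.1 (hts hj)).2
    _ ≤ V #t := hV t fun j hj => (Finset.mem_filter.1 (hts hj)).1

end UpperCount

section LevelMax

variable {α : Type*} (s : Finset α) (c : α → ℕ) (a : α → ℝ)

def levelMax (k : ℕ) : ℝ := {p ∈ s | k ≤ c p}.fold max 0 a

theorem le_levelMax {p : α} (hp : p ∈ s) : a p ≤ levelMax s c a (c p) :=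
  (le_fold_max _).2 (Or.inr ⟨p, Finset.mem_filter.2 ⟨hp, le_rfl⟩, le_rfl⟩)

theorem levelMax_nonneg (k : ℕ) : 0 ≤ levelMax s c a k :=
  (le_fold_max _).2 (Or.inl le_rfl)

theorem antitone_levelMax : Antitone (levelMax s c a) := fun k _ hkl =>
  (fold_max_le _).2 ⟨levelMax_nonneg s c a k, fun p hp => (le_fold_max _).2 <| Or.inr
    ⟨p, Finset.mem_filter.2 ⟨(Finset.mem_filter.1 hp).1, hkl.trans (Finset.mem_filter.1 hp).2⟩,
      le_rfl⟩⟩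

theorem levelMax_eq_zero {k : ℕ} (h : ∀ p ∈ s, c p < k) : levelMax s c a k = 0 := by
  rw [levelMax, filter_false_of_mem fun p hp => (h p hp).not_ge, fold_empty]

theorem sqrt_levelMax_le_sqrt_div {k : ℕ} (hk : k ≠ 0) {V : ℝ}
    (h : ∀ p ∈ s, k ≤ c p → k * a p ≤ V) : √(levelMax s c a k) ≤ √(V / k) := by
  have hle : levelMax s c a k ≤ max (V / k) 0 :=
    (fold_max_le _).2 ⟨le_max_right _ _, fun p hp => le_max_of_le_left <|
      (le_div_iff₀' (by positivity)).2 (h p (Finset.mem_filter.1 hp).1 (Finset.mem_filter.1 hp).2)⟩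
  refine (Real.sqrt_le_sqrt hle).trans_eq ?_
  rcases le_total (V / k) 0 with hV | hV
  · simp [hV, Real.sqrt_eq_zero'.2 hV]
  · simp [hV]

end LevelMax

section Abel

variable {α : Type*}

theorem sum_mul_comp_eq_sum_sub_mul (s : Finset α) (w : α → ℝ) (c : α → ℕ) (φ : ℕ → ℝ) {N : ℕ}
    (hc : ∀ p ∈ s, c p ≤ N) (hφ : φ N = 0) :
    ∑ p ∈ s, w p * φ (c p) = ∑ k ∈ range N, (φ k - φ (k + 1)) * ∑ p ∈ s with c p ≤ k, w p := by
  have htel : ∀ p ∈ s, φ (c p) = ∑ k ∈ range N with c p ≤ k, (φ k - φ (k + 1)) := by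
    intro p hp
    have hIco : {k ∈ range N | c p ≤ k} = Finset.Ico (c p) N := by
      ext k
      simp only [Finset.mem_filter, Finset.mem_range, Finset.mem_Ico]
      omega
    rw [hIco, sum_Ico_eq_sub _ (hc p hp), sum_range_sub', sum_range_sub', hφ]
    ring
  simp_rw [mul_sum, sum_filter]
  rw [sum_comm]
  refine sum_congr rfl fun p hp => ?_
  rw [htel p hp, sum_filter, mul_sum]
  refine sum_congr rfl fun k _ => ?_
  split_ifs <;> ring

theorem sum_mul_comp_le {s : Finset α} {w : α → ℝ} {c : α → ℕ} {φ : ℕ → ℝ} {N : ℕ}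
    (hc : ∀ p ∈ s, c p ≤ N) (hφ : Antitone φ) (hφN : φ N = 0) {A : ℕ → ℝ}
    (hA : ∀ k < N, ∑ p ∈ s with c p ≤ k, w p ≤ A k) :
    ∑ p ∈ s, w p * φ (c p) ≤ ∑ k ∈ range N, (φ k - φ (k + 1)) * A k := by
  rw [sum_mul_comp_eq_sum_sub_mul s w c φ hc hφN]
  exact sum_le_sum fun k hk =>
    mul_le_mul_of_nonneg_left (hA k (Finset.mem_range.1 hk)) (sub_nonneg.2 (hφ k.le_succ))

theorem sum_mul_comp_mul_comp_le {s : Finset α} {w : α → ℝ} {c₁ c₂ : α → ℕ} {φ ψ : ℕ → ℝ}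
    {N₁ N₂ : ℕ} (hc₁ : ∀ p ∈ s, c₁ p ≤ N₁) (hc₂ : ∀ p ∈ s, c₂ p ≤ N₂)
    (hφ : Antitone φ) (hψ : Antitone ψ) (hφN : φ N₁ = 0) (hψN : ψ N₂ = 0) {C : ℝ}
    {A B : ℕ → ℝ}
    (hAB : ∀ k < N₁, ∀ l < N₂, ∑ p ∈ s with c₁ p ≤ k ∧ c₂ p ≤ l, w p ≤ C * (A k * B l)) :
    ∑ p ∈ s, w p * (φ (c₁ p) * ψ (c₂ p)) ≤
      C * (∑ k ∈ range N₁, (φ k - φ (k + 1)) * A k) *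
        ∑ l ∈ range N₂, (ψ l - ψ (l + 1)) * B l := by
  have inner : ∀ k < N₁, ∑ p ∈ s with c₁ p ≤ k, w p * ψ (c₂ p) ≤
      C * A k * ∑ l ∈ range N₂, (ψ l - ψ (l + 1)) * B l := by
    intro k hk
    calc ∑ p ∈ s with c₁ p ≤ k, w p * ψ (c₂ p)
        ≤ ∑ l ∈ range N₂, (ψ l - ψ (l + 1)) * (C * (A k * B l)) := by
          refine sum_mul_comp_le (fun p hp => hc₂ p (Finset.mem_filter.1 hp).1) hψ hψN
            fun l hl => ?_
          rw [filter_filter]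
          exact hAB k hk l hl
      _ = _ := by
          rw [mul_sum]
          exact sum_congr rfl fun l _ => by ring
  calc ∑ p ∈ s, w p * (φ (c₁ p) * ψ (c₂ p)) = ∑ p ∈ s, w p * ψ (c₂ p) * φ (c₁ p) :=
        sum_congr rfl fun p _ => by ring
    _ ≤ _ := sum_mul_comp_le hc₁ hφ hφN inner
    _ = _ := by
      rw [mul_sum _ _ C, sum_mul]
      exact sum_congr rfl fun k _ => by ring

theorem sum_sub_mul_harmonic (φ : ℕ → ℝ) {n : ℕ} (hφ : φ (n + 1) = 0) :
    ∑ k ∈ range (n + 1), (φ k - φ (k + 1)) * harmonic k =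
      ∑ t ∈ range n, φ (t + 1) / (t + 1) := by
  have habel := sum_mul_comp_eq_sum_sub_mul (range n) (fun t => 1 / ((t : ℝ) + 1)) (· + 1) φ
    (fun t ht => by simpa using (Finset.mem_range.1 ht).le) hφ
  calc ∑ k ∈ range (n + 1), (φ k - φ (k + 1)) * harmonic k
      = ∑ k ∈ range (n + 1),
          (φ k - φ (k + 1)) * ∑ t ∈ range n with t + 1 ≤ k, 1 / ((t : ℝ) + 1) := by
        refine sum_congr rfl fun k hk => ?_
        have hrange : {t ∈ range n | t + 1 ≤ k} = range k := by
          ext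
          simp only [Finset.mem_filter, Finset.mem_range] at hk ⊢
          omega
        rw [hrange, cast_harmonic_eq_sum]
    _ = ∑ t ∈ range n, φ (t + 1) / (t + 1) := by
        rw [← habel]
        exact sum_congr rfl fun t _ => by ring

end Abel

section Grid

theorem sum_inv_sq_le_of_le (t : Finset ℕ) {S : ℕ} (hS : S ≠ 0) (ht : ∀ j ∈ t, S ≤ j) :
    ∑ j ∈ t, 1 / ((j : ℝ) + 1) ^ 2 ≤ 1 / (S : ℝ) := by
  set N := max S (t.sup id + 1)
  have hsub : t ⊆ Finset.Ico S N := fun j hj =>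
    Finset.mem_Ico.2 ⟨ht j hj, lt_max_of_lt_right (Nat.lt_succ_of_le (le_sup (f := id) hj))⟩
  calc ∑ j ∈ t, 1 / ((j : ℝ) + 1) ^ 2 ≤ ∑ j ∈ Finset.Ico S N, 1 / ((j : ℝ) + 1) ^ 2 :=
        sum_le_sum_of_subset_of_nonneg hsub fun _ _ _ => by positivity
    _ = ∑ i ∈ Finset.Ioc S N, ((i : ℝ) ^ 2)⁻¹ := by
        rw [← Finset.Ico_add_one_add_one_eq_Ioc,
          ← Finset.sum_Ico_add' (fun i : ℕ => ((i : ℝ) ^ 2)⁻¹)]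
        simp
    _ ≤ (S : ℝ)⁻¹ - (N : ℝ)⁻¹ := sum_Ioc_inv_sq_le_sub hS (le_max_left _ _)
    _ ≤ 1 / S := by rw [one_div]; exact sub_le_self _ (by positivity)

variable {P : Finset (ℕ × ℕ)} {R S : ℕ}

theorem sum_inv_fiber_le_harmonic (hcol : ∀ j, #{p ∈ P | p.2 = j} ≤ R) (j : ℕ) :
    ∑ p ∈ P with p.2 = j, 1 / ((p.1 : ℝ) + 1) ≤ harmonic R := by
  refine (sum_inv_le_harmonic_card _ Prod.fst fun p hp q hq h => ?_).trans ?_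
  · exact Prod.ext h ((Finset.mem_filter.1 hp).2.trans (Finset.mem_filter.1 hq).2.symm)
  · exact_mod_cast monotone_harmonic (hcol j)

theorem sum_inv_fiber_le_div (hR : R ≠ 0) (hcol : ∀ j, #{p ∈ P | p.2 = j} ≤ R)
    (hP : ∀ p ∈ P, (p.2 + 1) * R ≤ (p.1 + 1) * S) (j : ℕ) :
    ∑ p ∈ P with p.2 = j, 1 / ((p.1 : ℝ) + 1) ≤ S / ((j : ℝ) + 1) := by
  have hterm : ∀ p ∈ {p ∈ P | p.2 = j}, 1 / ((p.1 : ℝ) + 1) ≤ S / (((j : ℝ) + 1) * R) := by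
    intro p hp
    obtain ⟨hpP, rfl⟩ := Finset.mem_filter.1 hp
    rw [div_le_div_iff₀ (by positivity) (by positivity)]
    exact_mod_cast by simpa [mul_comm] using hP p hpP
  calc _ ≤ #{p ∈ P | p.2 = j} * (S / (((j : ℝ) + 1) * R)) :=
        (sum_le_sum hterm).trans_eq (by rw [sum_const, nsmul_eq_mul])
    _ ≤ R * (S / (((j : ℝ) + 1) * R)) := by gcongr; exact_mod_cast hcol j
    _ = S / ((j : ℝ) + 1) := by field_simp

-- Below the line `(j + 1) / S = (i + 1) / R` a column `j` has at most `R` points, all with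
-- `i + 1 ≥ (j + 1) R / S`, so its `Σ 1 / (i + 1)` is at most `min (harmonic R) (S / (j + 1))`.
theorem sum_inv_mul_le_of_card_col_le (hR : R ≠ 0) (hS : S ≠ 0)
    (hcol : ∀ j, #{p ∈ P | p.2 = j} ≤ R) (hP : ∀ p ∈ P, (p.2 + 1) * R ≤ (p.1 + 1) * S) :
    ∑ p ∈ P, 1 / (((p.1 : ℝ) + 1) * ((p.2 : ℝ) + 1)) ≤ harmonic R * harmonic S + 1 := by
  set col : ℕ → ℝ := fun j => ∑ p ∈ P with p.2 = j, 1 / ((p.1 : ℝ) + 1)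
  set J := P.image Prod.snd
  calc ∑ p ∈ P, 1 / (((p.1 : ℝ) + 1) * ((p.2 : ℝ) + 1))
      = ∑ j ∈ J, col j * (1 / ((j : ℝ) + 1)) := by
        rw [← sum_fiberwise_of_maps_to fun p hp => Finset.mem_image_of_mem Prod.snd hp]
        refine sum_congr rfl fun j _ => ?_
        rw [sum_mul]
        refine sum_congr rfl fun p hp => ?_
        rw [(Finset.mem_filter.1 hp).2, one_div_mul_one_div]
    _ = ∑ j ∈ J with j < S, col j * (1 / ((j : ℝ) + 1)) +
          ∑ j ∈ J with ¬ j < S, col j * (1 / ((j : ℝ) + 1)) :=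
        (sum_filter_add_sum_filter_not _ _ _).symm
    _ ≤ ∑ j ∈ range S, harmonic R * (1 / ((j : ℝ) + 1)) +
          ∑ j ∈ J with ¬ j < S, S * (1 / ((j : ℝ) + 1) ^ 2) := by
        refine add_le_add ?_ (sum_le_sum fun j _ => ?_)
        · refine (sum_le_sum fun j _ => ?_).trans (sum_le_sum_of_subset_of_nonneg
            (fun j hj => Finset.mem_range.2 (Finset.mem_filter.1 hj).2) fun _ _ _ => ?_)
          · gcongr
            exact sum_inv_fiber_le_harmonic hcol j
          · have := one_le_harmonic hR
            positivity
        · calc col j * (1 / ((j : ℝ) + 1)) ≤ S / ((j : ℝ) + 1) * (1 / ((j : ℝ) + 1)) := by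
                gcongr
                exact sum_inv_fiber_le_div hR hcol hP j
            _ = _ := by field_simp
    _ ≤ harmonic R * harmonic S + S * (1 / S) := by
        rw [← mul_sum, ← mul_sum, ← cast_harmonic_eq_sum]
        gcongr
        exact sum_inv_sq_le_of_le _ hS fun j hj => not_lt.1 (Finset.mem_filter.1 hj).2
    _ = harmonic R * harmonic S + 1 := by field_simp

theorem sum_inv_mul_le_of_card_fibers_le (hcol : ∀ j, #{p ∈ P | p.2 = j} ≤ R)
    (hrow : ∀ i, #{p ∈ P | p.1 = i} ≤ S) :
    ∑ p ∈ P, 1 / (((p.1 : ℝ) + 1) * ((p.2 : ℝ) + 1)) ≤ 4 * (harmonic R * harmonic S) := by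
  rcases P.eq_empty_or_nonempty with rfl | ⟨p₀, hp₀⟩
  · have h0 : ∀ n, (0 : ℝ) ≤ harmonic n := fun n => by rw [cast_harmonic_eq_sum]; positivity
    simpa using mul_nonneg (h0 R) (h0 S)
  have hR : R ≠ 0 := Nat.pos_iff_ne_zero.1 <| (hcol p₀.2).trans_lt' <|
    card_pos.2 ⟨p₀, Finset.mem_filter.2 ⟨hp₀, rfl⟩⟩
  have hS : S ≠ 0 := Nat.pos_iff_ne_zero.1 <| (hrow p₀.1).trans_lt' <|
    card_pos.2 ⟨p₀, Finset.mem_filter.2 ⟨hp₀, rfl⟩⟩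
  rw [← sum_filter_add_sum_filter_not P fun p => (p.2 + 1) * R ≤ (p.1 + 1) * S]
  set Q := {p ∈ P | ¬ (p.2 + 1) * R ≤ (p.1 + 1) * S}
  have below := sum_inv_mul_le_of_card_col_le (P := {p ∈ P | (p.2 + 1) * R ≤ (p.1 + 1) * S})
    hR hS (fun j => (Finset.card_le_card fun p hp => by
      simp only [Finset.mem_filter] at hp ⊢; tauto).trans (hcol j))
    (fun p hp => (Finset.mem_filter.1 hp).2)
  have above : ∑ p ∈ Q, 1 / (((p.1 : ℝ) + 1) * ((p.2 : ℝ) + 1)) ≤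
      harmonic S * harmonic R + 1 := by
    let e := (Equiv.prodComm ℕ ℕ).toEmbedding
    calc ∑ p ∈ Q, 1 / (((p.1 : ℝ) + 1) * ((p.2 : ℝ) + 1))
        = ∑ q ∈ Q.map e, 1 / (((q.1 : ℝ) + 1) * ((q.2 : ℝ) + 1)) := by
          rw [sum_map]
          exact sum_congr rfl fun p _ => by simp [e, mul_comm]
      _ ≤ harmonic S * harmonic R + 1 := by
          refine sum_inv_mul_le_of_card_col_le hS hR (fun i => ?_) fun q hq => ?_
          · rw [filter_map, card_map]
            refine (Finset.card_le_card fun p hp => ?_).trans (hrow i)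
            simp only [Function.Embedding.coeFn_mk, Equiv.coe_prodComm, Function.comp_apply,
              Prod.snd_swap, not_le, Finset.mem_filter, e, Q] at hp ⊢
            exact ⟨hp.1.1, hp.2⟩
          · obtain ⟨p, hp, rfl⟩ := Finset.mem_map.1 hq
            exact le_of_lt (not_le.1 (Finset.mem_filter.1 hp).2)
  have hone : (1 : ℝ) ≤ harmonic R * harmonic S := by
    exact_mod_cast one_le_mul_of_one_le_of_one_le (one_le_harmonic hR) (one_le_harmonic hS)
  linarith [mul_comm (harmonic S : ℝ) (harmonic R)]

end Grid

theorem card_filter_val_eq_le {α : Type*} {k R : ℕ} {Q : Finset α} {g : α → Fin k}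
    (h : ∀ j, #{p ∈ Q | g p = j} ≤ R) (j : ℕ) : #{p ∈ Q | (g p : ℕ) = j} ≤ R := by
  by_cases hj : j < k
  · convert h ⟨j, hj⟩ using 2
    ext
    simp [Fin.ext_iff]
  · rw [filter_false_of_mem fun p _ (hp : (g p : ℕ) = j) => hj (hp ▸ (g p).2)]
    simp

theorem sum_inv_mul_le_of_card_fibers_le_fin {n m : ℕ} (Q : Finset (Fin n × Fin m)) {R S : ℕ}
    (hcol : ∀ j, #{p ∈ Q | p.2 = j} ≤ R) (hrow : ∀ i, #{p ∈ Q | p.1 = i} ≤ S) :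
    ∑ p ∈ Q, 1 / ((((p.1 : ℕ) : ℝ) + 1) * (((p.2 : ℕ) : ℝ) + 1)) ≤
      4 * (harmonic R * harmonic S) := by
  have := sum_inv_mul_le_of_card_fibers_le
    (P := Q.map (Fin.valEmbedding.prodMap Fin.valEmbedding)) (R := R) (S := S)
    (fun j => ?_) fun i => ?_
  · simpa using this
  · rw [filter_map, card_map]
    exact card_filter_val_eq_le hcol j
  · rw [filter_map, card_map]
    exact card_filter_val_eq_le hrow i

theorem sum_inv_mul_le_of_upperCount_le {n m : ℕ} (a : Fin n → Fin m → ℝ) (k l : ℕ) :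
    ∑ p : Fin n × Fin m with upperCount univ (a · p.2) p.1 ≤ k ∧ upperCount univ (a p.1 ·) p.2 ≤ l,
      1 / ((((p.1 : ℕ) : ℝ) + 1) * (((p.2 : ℕ) : ℝ) + 1)) ≤ 4 * (harmonic k * harmonic l) := by
  refine sum_inv_mul_le_of_card_fibers_le_fin _ (fun j => ?_) fun i => ?_
  · calc _ ≤ #{i ∈ univ | upperCount univ (a · j) i ≤ k} :=
          Finset.card_le_card_of_injOn Prod.fst (fun p hp => by
            simp only [Finset.mem_coe, Finset.mem_filter, Finset.mem_univ, true_and] at hp ⊢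
            exact hp.2 ▸ hp.1.1) fun p hp q hq h => by
            simp only [Finset.mem_coe, Finset.mem_filter, Finset.mem_univ, true_and] at hp hq
            exact Prod.ext h (hp.2.trans hq.2.symm)
      _ ≤ k := card_upperCount_le _ _ k
  · calc _ ≤ #{j ∈ univ | upperCount univ (a i ·) j ≤ l} :=
          Finset.card_le_card_of_injOn Prod.snd (fun p hp => by
            simp only [Finset.mem_coe, Finset.mem_filter, Finset.mem_univ, true_and] at hp ⊢
            exact hp.2 ▸ hp.1.2) fun p hp q hq h => by
            simp only [Finset.mem_coe, Finset.mem_filter, Finset.mem_univ, true_and] at hp hq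
            exact Prod.ext (hp.2.trans hq.2.symm) h
      _ ≤ l := card_upperCount_le _ _ l

-- The terms `√(V k / k) / k = √(V k) / k ^ (3 / 2)` of the series in the hypotheses.
noncomputable def sqrtPartialSum (V : ℕ → ℝ) (n : ℕ) : ℝ :=
  ∑ k ∈ range n, √(V (k + 1) / (k + 1)) / (k + 1)

theorem sqrtPartialSum_nonneg (V : ℕ → ℝ) (n : ℕ) : 0 ≤ sqrtPartialSum V n :=
  sum_nonneg fun _ _ => by positivity

theorem sqrtPartialSum_const_mul {c : ℝ} (hc : 0 ≤ c) (V : ℕ → ℝ) (n : ℕ) :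
    sqrtPartialSum (fun k => c * V k) n = √c * sqrtPartialSum V n := by
  rw [sqrtPartialSum, sqrtPartialSum, Finset.mul_sum]
  exact Finset.sum_congr rfl fun k _ => by rw [mul_div_assoc, Real.sqrt_mul hc, mul_div_assoc]

theorem sum_sub_mul_harmonic_le_sqrtPartialSum {φ V : ℕ → ℝ} {n : ℕ} (hφ : φ (n + 1) = 0)
    (hφV : ∀ t < n, φ (t + 1) ≤ √(V (t + 1) / (t + 1))) :
    ∑ k ∈ range (n + 1), (φ k - φ (k + 1)) * harmonic k ≤ sqrtPartialSum V n := by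
  rw [sum_sub_mul_harmonic φ hφ]
  exact sum_le_sum fun t ht => by gcongr; exact hφV t (Finset.mem_range.1 ht)

theorem sum_div_le_sqrt_mul_sqrtPartialSum {n : ℕ} (a : Fin n → ℝ) (V : ℕ → ℝ)
    (hV : ∀ t : Finset (Fin n), ∑ i ∈ t, a i ≤ V #t) :
    ∑ i, a i / (((i : ℕ) : ℝ) + 1) ≤ √(V 1) * sqrtPartialSum V n := by
  set c := upperCount univ a
  set G := levelMax univ c a
  have hG : ∀ k ≠ 0, √(G k) ≤ √(V k / k) := fun k hk =>
    sqrt_levelMax_le_sqrt_div _ _ _ hk fun i _ hi => mul_le_of_le_upperCount (fun t _ => hV t) hi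
  have hc : ∀ i, c i ≤ n := fun i => by simpa using upperCount_le_card univ a i
  have hGn : G (n + 1) = 0 := levelMax_eq_zero _ _ _ fun i _ => Nat.lt_succ_of_le (hc i)
  calc ∑ i, a i / (((i : ℕ) : ℝ) + 1) ≤ ∑ i : Fin n, 1 / (((i : ℕ) : ℝ) + 1) * G (c i) :=
        sum_le_sum fun i _ => by
          rw [one_div_mul_eq_div]
          gcongr
          exact le_levelMax _ _ _ (Finset.mem_univ i)
    _ ≤ ∑ k ∈ range (n + 1), (G k - G (k + 1)) * harmonic k :=
        sum_mul_comp_le (fun i _ => (hc i).trans n.le_succ) (antitone_levelMax _ _ _) hGn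
          fun k _ => (sum_inv_le_harmonic_card _ _ Fin.val_injective.injOn).trans
            (by exact_mod_cast monotone_harmonic (card_upperCount_le univ a k) :
              (harmonic #{i ∈ univ | c i ≤ k} : ℝ) ≤ harmonic k)
    _ = ∑ t ∈ range n, G (t + 1) / (t + 1) := sum_sub_mul_harmonic G hGn
    _ ≤ ∑ t ∈ range n, √(V 1) * (√(V (t + 1) / (t + 1)) / (t + 1)) := by
        refine sum_le_sum fun t _ => ?_
        rw [mul_div_assoc']
        gcongr
        calc G (t + 1) = √(G (t + 1)) * √(G (t + 1)) :=
              (Real.mul_self_sqrt (levelMax_nonneg _ _ _ _)).symm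
          _ ≤ √(G 1) * √(G (t + 1)) := by
              gcongr
              exact antitone_levelMax _ _ _ (Nat.le_add_left 1 t)
          _ ≤ √(V 1) * √(V (t + 1) / (t + 1)) :=
              mul_le_mul (by simpa using hG 1 one_ne_zero)
                (by exact_mod_cast hG (t + 1) t.succ_ne_zero) (Real.sqrt_nonneg _)
                (Real.sqrt_nonneg _)
    _ = √(V 1) * sqrtPartialSum V n := by rw [sqrtPartialSum, mul_sum]

theorem sum_div_mul_le_sqrtPartialSum_mul_sqrtPartialSum {n m : ℕ} (a : Fin n → Fin m → ℝ)
    (V₁ V₂ : ℕ → ℝ) (hV₁ : ∀ j (t : Finset (Fin n)), ∑ i ∈ t, a i j ≤ V₁ #t)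
    (hV₂ : ∀ i (t : Finset (Fin m)), ∑ j ∈ t, a i j ≤ V₂ #t) :
    ∑ i, ∑ j, a i j / ((((i : ℕ) : ℝ) + 1) * (((j : ℕ) : ℝ) + 1)) ≤
      4 * sqrtPartialSum V₁ n * sqrtPartialSum V₂ m := by
  let b : Fin n × Fin m → ℝ := fun p => a p.1 p.2
  let c₁ : Fin n × Fin m → ℕ := fun p => upperCount univ (a · p.2) p.1
  let c₂ : Fin n × Fin m → ℕ := fun p => upperCount univ (a p.1 ·) p.2
  let φ : ℕ → ℝ := fun k => √(levelMax univ c₁ b k)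
  let ψ : ℕ → ℝ := fun l => √(levelMax univ c₂ b l)
  have hc₁ : ∀ p, c₁ p ≤ n := fun p => by
    simpa using upperCount_le_card univ (a · p.2) p.1
  have hc₂ : ∀ p, c₂ p ≤ m := fun p => by
    simpa using upperCount_le_card univ (a p.1 ·) p.2
  have hφN : φ (n + 1) = 0 := by
    simp [φ, levelMax_eq_zero _ _ _ fun p _ => Nat.lt_succ_of_le (hc₁ p)]
  have hψN : ψ (m + 1) = 0 := by
    simp [ψ, levelMax_eq_zero _ _ _ fun p _ => Nat.lt_succ_of_le (hc₂ p)]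
  have hφV : ∀ t < n, φ (t + 1) ≤ √(V₁ (t + 1) / (t + 1)) := fun t _ => by
    exact_mod_cast sqrt_levelMax_le_sqrt_div _ _ _ t.succ_ne_zero fun (p : Fin n × Fin m) _ hp =>
      mul_le_of_le_upperCount (fun t _ => hV₁ p.2 t) hp
  have hψV : ∀ t < m, ψ (t + 1) ≤ √(V₂ (t + 1) / (t + 1)) := fun t _ => by
    exact_mod_cast sqrt_levelMax_le_sqrt_div _ _ _ t.succ_ne_zero fun (p : Fin n × Fin m) _ hp =>
      mul_le_of_le_upperCount (fun t _ => hV₂ p.1 t) hp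
  have hψ₀ : 0 ≤ ∑ l ∈ range (m + 1), (ψ l - ψ (l + 1)) * harmonic l := by
    rw [sum_sub_mul_harmonic ψ hψN]
    exact sum_nonneg fun _ _ => by positivity
  calc ∑ i, ∑ j, a i j / ((((i : ℕ) : ℝ) + 1) * (((j : ℕ) : ℝ) + 1))
      = ∑ p : Fin n × Fin m, 1 / ((((p.1 : ℕ) : ℝ) + 1) * (((p.2 : ℕ) : ℝ) + 1)) * b p := by
        rw [Fintype.sum_prod_type]
        exact sum_congr rfl fun i _ => sum_congr rfl fun j _ => by ring
    _ ≤ ∑ p : Fin n × Fin m,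
          1 / ((((p.1 : ℕ) : ℝ) + 1) * (((p.2 : ℕ) : ℝ) + 1)) * (φ (c₁ p) * ψ (c₂ p)) := by
        gcongr with p
        exact le_sqrt_mul_sqrt (le_levelMax _ _ _ (mem_univ p)) (le_levelMax _ _ _ (mem_univ p))
    _ ≤ 4 * (∑ k ∈ range (n + 1), (φ k - φ (k + 1)) * harmonic k) *
          ∑ l ∈ range (m + 1), (ψ l - ψ (l + 1)) * harmonic l :=
        sum_mul_comp_mul_comp_le (fun p _ => (hc₁ p).trans n.le_succ)
          (fun p _ => (hc₂ p).trans m.le_succ)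
          (fun k l h => Real.sqrt_le_sqrt (antitone_levelMax _ _ _ h))
          (fun k l h => Real.sqrt_le_sqrt (antitone_levelMax _ _ _ h)) hφN hψN
          fun k _ l _ => by exact_mod_cast sum_inv_mul_le_of_upperCount_le a k l
    _ ≤ 4 * sqrtPartialSum V₁ n * sqrtPartialSum V₂ m := by
        gcongr
        · exact mul_nonneg zero_le_four (sqrtPartialSum_nonneg V₁ n)
        · exact sum_sub_mul_harmonic_le_sqrtPartialSum hφN hφV
        · exact sum_sub_mul_harmonic_le_sqrtPartialSum hψN hψV

section Variation

noncomputable def sqrtSeries (v : ℕ → ℝ≥0∞) : ℝ≥0∞ :=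
  ∑' n : ℕ, v (n + 1) ^ ((1 : ℝ) / 2) / ((n : ℝ≥0∞) + 1) ^ ((3 : ℝ) / 2)

theorem ne_top_of_sqrtSeries_ne_top {v : ℕ → ℝ≥0∞} (hv : sqrtSeries v ≠ ⊤) (n : ℕ) :
    v (n + 1) ≠ ⊤ := by
  intro htop
  refine hv (eq_top_iff.2 ((ENNReal.le_tsum n).trans_eq' ?_))
  rw [htop, ENNReal.top_rpow_of_pos (by norm_num)]
  exact ENNReal.top_div_of_ne_top (ENNReal.rpow_ne_top_of_nonneg (by norm_num : (0 : ℝ) ≤ 3 / 2)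
    (by simp : (n : ℝ≥0∞) + 1 ≠ ⊤))

theorem sqrtPartialSum_le_toReal_sqrtSeries {v : ℕ → ℝ≥0∞} (hv : sqrtSeries v ≠ ⊤) (n : ℕ) :
    sqrtPartialSum (fun k => (v k).toReal) n ≤ (sqrtSeries v).toReal := by
  have hterm : ∀ k : ℕ, (v (k + 1) ^ ((1 : ℝ) / 2) / ((k : ℝ≥0∞) + 1) ^ ((3 : ℝ) / 2)).toReal =
      √((v (k + 1)).toReal / (k + 1)) / (k + 1) := fun k => by
    rw [ENNReal.toReal_div, ← ENNReal.toReal_rpow, ← ENNReal.toReal_rpow]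
    exact_mod_cast rpow_half_div_rpow_three_halves ENNReal.toReal_nonneg (by positivity)
  calc sqrtPartialSum (fun k => (v k).toReal) n
      = (∑ k ∈ Finset.range n,
          v (k + 1) ^ ((1 : ℝ) / 2) / ((k : ℝ≥0∞) + 1) ^ ((3 : ℝ) / 2)).toReal := by
        rw [ENNReal.toReal_sum fun k _ => ne_top_of_le_ne_top hv (ENNReal.le_tsum k)]
        simp only [hterm, sqrtPartialSum]
    _ ≤ _ := ENNReal.toReal_mono hv (ENNReal.sum_le_tsum _)

variable {f : ℝ → ℝ → ℝ}

theorem modV2_eq_modV1_swap : modV2 f = modV1 (Function.swap f) := rfl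

theorem LamV2_eq_LamV1_swap (Λ : ℕ → ℝ) : LamV2 Λ f = LamV1 Λ (Function.swap f) := rfl

theorem modV1_zero : modV1 f 0 = 0 := by simp [modV1]

theorem NonoverlapIcc.comp_embedding {n k : ℕ} {I : Fin n → ℝ × ℝ} (h : NonoverlapIcc n I)
    (e : Fin k ↪ Fin n) : NonoverlapIcc k (I ∘ e) :=
  ⟨fun i => h.1 (e i), fun i j hij => h.2 (e i) (e j) (e.injective.ne hij)⟩

theorem NonoverlapIcc.fst_mem {n : ℕ} {I : Fin n → ℝ × ℝ} (h : NonoverlapIcc n I) (i : Fin n) :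
    (I i).1 ∈ Icc 0 (2 * Real.pi) :=
  ⟨(h.1 i).1, (h.1 i).2.1.le.trans (h.1 i).2.2⟩

theorem NonoverlapIcc.snd_mem {n : ℕ} {I : Fin n → ℝ × ℝ} (h : NonoverlapIcc n I) (i : Fin n) :
    (I i).2 ∈ Icc 0 (2 * Real.pi) :=
  ⟨(h.1 i).1.trans (h.1 i).2.1.le, (h.1 i).2.2⟩

theorem ofReal_sum_le_modV1 {y : ℝ} (hy : y ∈ Icc 0 (2 * Real.pi)) {n : ℕ} {I : Fin n → ℝ × ℝ}
    (hI : NonoverlapIcc n I) (t : Finset (Fin n)) :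
    ENNReal.ofReal (∑ i ∈ t, |f (I i).2 y - f (I i).1 y|) ≤ modV1 f #t := by
  let e := t.orderEmbOfFin rfl
  have hsum : ∑ i ∈ t, |f (I i).2 y - f (I i).1 y| = ∑ l, |f (I (e l)).2 y - f (I (e l)).1 y| := by
    conv_lhs => rw [← t.map_orderEmbOfFin_univ rfl, Finset.sum_map]
    rfl
  rw [hsum]
  exact le_iSup₂_of_le y hy (le_iSup₂_of_le (I ∘ e) (hI.comp_embedding e.toEmbedding) le_rfl)

theorem sum_le_toReal_modV1 (hf : ∀ k, modV1 f k ≠ ⊤) {y : ℝ} (hy : y ∈ Icc 0 (2 * Real.pi))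
    {n : ℕ} {I : Fin n → ℝ × ℝ} (hI : NonoverlapIcc n I) (t : Finset (Fin n)) :
    ∑ i ∈ t, |f (I i).2 y - f (I i).1 y| ≤ (modV1 f #t).toReal :=
  (ENNReal.ofReal_le_iff_le_toReal (hf _)).1 (ofReal_sum_le_modV1 hy hI t)

theorem modV1_ne_top (h : sqrtSeries (modV1 f) ≠ ⊤) : ∀ k, modV1 f k ≠ ⊤
  | 0 => by simp [modV1_zero]
  | k + 1 => ne_top_of_sqrtSeries_ne_top h k

theorem lamV1_le (h : sqrtSeries (modV1 f) ≠ ⊤) :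
    LamV1 (fun n => (n : ℝ)) f ≤
      ENNReal.ofReal (√((modV1 f 1).toReal) * (sqrtSeries (modV1 f)).toReal) := by
  refine iSup₂_le fun y hy => iSup₂_le fun n I => iSup_le fun hI => ENNReal.ofReal_le_ofReal ?_
  calc ∑ i, |f (I i).2 y - f (I i).1 y| / (((i : ℕ) + 1 : ℕ) : ℝ)
      = ∑ i, |f (I i).2 y - f (I i).1 y| / (((i : ℕ) : ℝ) + 1) := by push_cast; rfl
    _ ≤ √((modV1 f 1).toReal) * sqrtPartialSum (fun k => (modV1 f k).toReal) n :=
        sum_div_le_sqrt_mul_sqrtPartialSum _ (fun k => (modV1 f k).toReal)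
          (sum_le_toReal_modV1 (modV1_ne_top h) hy hI)
    _ ≤ _ := by gcongr; exact sqrtPartialSum_le_toReal_sqrtSeries h n

theorem sum_abs_rect_le_two_mul_toReal_modV1 (hf : ∀ k, modV1 f k ≠ ⊤) {y₁ y₂ : ℝ}
    (hy₁ : y₁ ∈ Icc 0 (2 * Real.pi)) (hy₂ : y₂ ∈ Icc 0 (2 * Real.pi)) {n : ℕ}
    {I : Fin n → ℝ × ℝ} (hI : NonoverlapIcc n I) (t : Finset (Fin n)) :
    ∑ i ∈ t, |f (I i).1 y₁ - f (I i).1 y₂ - f (I i).2 y₁ + f (I i).2 y₂| ≤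
      2 * (modV1 f #t).toReal :=
  calc _ ≤ ∑ i ∈ t, (|f (I i).2 y₁ - f (I i).1 y₁| + |f (I i).2 y₂ - f (I i).1 y₂|) :=
        Finset.sum_le_sum fun i _ => abs_sub_sub_add_le _ _ _ _
    _ ≤ 2 * (modV1 f #t).toReal := by
        rw [Finset.sum_add_distrib, two_mul]
        exact add_le_add (sum_le_toReal_modV1 hf hy₁ hI t) (sum_le_toReal_modV1 hf hy₂ hI t)

theorem lamV12_le (h₁ : sqrtSeries (modV1 f) ≠ ⊤) (h₂ : sqrtSeries (modV2 f) ≠ ⊤) :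
    LamV12 (fun n => (n : ℝ)) f ≤
      ENNReal.ofReal (8 * (sqrtSeries (modV1 f)).toReal * (sqrtSeries (modV2 f)).toReal) := by
  refine iSup₂_le fun n m => iSup₂_le fun I J => iSup₂_le fun hI hJ => ENNReal.ofReal_le_ofReal ?_
  rw [modV2_eq_modV1_swap] at h₂ ⊢
  set V₁ : ℕ → ℝ := fun k => (modV1 f k).toReal
  set V₂ : ℕ → ℝ := fun k => (modV1 (Function.swap f) k).toReal
  set a : Fin n → Fin m → ℝ := fun i j =>
    |f (I i).1 (J j).1 - f (I i).1 (J j).2 - f (I i).2 (J j).1 + f (I i).2 (J j).2|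
  have hcol : ∀ j (t : Finset (Fin n)), ∑ i ∈ t, a i j ≤ 2 * V₁ #t := fun j =>
    sum_abs_rect_le_two_mul_toReal_modV1 (modV1_ne_top h₁) (hJ.fst_mem j) (hJ.snd_mem j) hI
  have hrow : ∀ i (t : Finset (Fin m)), ∑ j ∈ t, a i j ≤ 2 * V₂ #t := fun i t => by
    simp only [a, sub_right_comm _ (f (I i).1 _)]
    exact sum_abs_rect_le_two_mul_toReal_modV1 (f := Function.swap f) (modV1_ne_top h₂)
      (hI.fst_mem i) (hI.snd_mem i) hJ t
  have e₁ := sqrtPartialSum_le_toReal_sqrtSeries h₁ n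
  have e₂ := sqrtPartialSum_le_toReal_sqrtSeries h₂ m
  calc _ = ∑ i, ∑ j, a i j / ((((i : ℕ) : ℝ) + 1) * (((j : ℕ) : ℝ) + 1)) := by push_cast; rfl
    _ ≤ 4 * sqrtPartialSum (fun k => 2 * V₁ k) n * sqrtPartialSum (fun k => 2 * V₂ k) m :=
        sum_div_mul_le_sqrtPartialSum_mul_sqrtPartialSum a _ _ hcol hrow
    _ = 4 * (√2 * √2) * sqrtPartialSum V₁ n * sqrtPartialSum V₂ m := by
        rw [sqrtPartialSum_const_mul zero_le_two, sqrtPartialSum_const_mul zero_le_two]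
        ring
    _ ≤ _ := by
        rw [Real.mul_self_sqrt zero_le_two, show (4 : ℝ) * 2 = 8 by norm_num]
        gcongr
        exact sqrtPartialSum_nonneg _ _

end Variation

theorem stmt3_general (f : ℝ → ℝ → ℝ)
    (h1 : ∑' n : ℕ, (modV1 f (n + 1)) ^ ((1 : ℝ)/2) / ((n : ℝ≥0∞) + 1) ^ ((3 : ℝ)/2) ≠ ⊤)
    (h2 : ∑' n : ℕ, (modV2 f (n + 1)) ^ ((1 : ℝ)/2) / ((n : ℝ≥0∞) + 1) ^ ((3 : ℝ)/2) ≠ ⊤) :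
    HarmonicV f ≠ ⊤ := by
  have h2' : sqrtSeries (modV1 (Function.swap f)) ≠ ⊤ := modV2_eq_modV1_swap (f := f) ▸ h2
  have hV₁ := ne_top_of_le_ne_top ENNReal.ofReal_ne_top (lamV1_le h1)
  have hV₂ : LamV2 (fun n => (n : ℝ)) f ≠ ⊤ :=
    LamV2_eq_LamV1_swap (f := f) _ ▸ ne_top_of_le_ne_top ENNReal.ofReal_ne_top (lamV1_le h2')
  have hV₁₂ := ne_top_of_le_ne_top ENNReal.ofReal_ne_top (lamV12_le h1 h2)
  exact ENNReal.add_ne_top.2 ⟨ENNReal.add_ne_top.2 ⟨hV₁, hV₂⟩, hV₁₂⟩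

/-- if `Σ √(v_j(n,f))/n^{3/2} < ∞` for `j = 1,2`, then `f ∈ HBV`. -/
theorem stmt3 (f : ℝ → ℝ → ℝ) (hper : Periodic2 f)
    (h1 : ∑' n : ℕ, (modV1 f (n + 1)) ^ ((1 : ℝ)/2) / ((n : ℝ≥0∞) + 1) ^ ((3 : ℝ)/2) ≠ ⊤)
    (h2 : ∑' n : ℕ, (modV2 f (n + 1)) ^ ((1 : ℝ)/2) / ((n : ℝ≥0∞) + 1) ^ ((3 : ℝ)/2) ≠ ⊤) :
    HarmonicV f ≠ ⊤ :=
  stmt3_general f h1 h2
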